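/- arXiv:2605.10468 — 4 statements merged into one kernel-verified Lean document; each statement's English description precedes it below -/
import Mathlib

section
/- Let $\{\eta_t\}_{t\ge 0}$ be positive step sizes with $\eta_t \to 0$ and $\sum_t \eta_t = \infty$. Then any real sequence $\{d_t\}$ satisfying $d_{t+1} = d_t - \eta_t \,\mathrm{sign}(d_t)$ converges to $0$ for any initial value $d_0 \in \mathbb{R}$. -/
open Filter Matrix

noncomputable def l2 {n : ℕ} (v : Fin n → ℝ) : ℝ := Real.sqrt (∑ i, v i ^ 2)
noncomputable def l1 {n : ℕ} (v : Fin n → ℝ) : ℝ := ∑ i, |v i|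
noncomputable def linf {n : ℕ} (v : Fin n → ℝ) : ℝ := ⨆ i, |v i|
noncomputable def maxNorm {m n : ℕ} (W : Matrix (Fin m) (Fin n) ℝ) : ℝ := ⨆ i, ⨆ j, |W i j|
noncomputable def spec {m n : ℕ} (W : Matrix (Fin m) (Fin n) ℝ) : ℝ :=
  sSup {c | ∃ v : Fin n → ℝ, l2 v = 1 ∧ c = l2 (W.mulVec v)}
noncomputable def l0 {n : ℕ} (v : Fin n → ℝ) : ℕ := (Finset.univ.filter fun j => v j ≠ 0).card

/-!
Each step moves `|d t|` to `|(|d t| - η t)|` (or to `0` when `d t = 0`). Fix `ε > 0` and a time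
after which `η t < ε`. While `|d t| ≥ ε` the step decreases `|d t|` by exactly `η t`, so by
divergence of `∑ η t` the sequence must enter `[0, ε)`; and once there it cannot leave, since
`|a - η| < ε` whenever `a, η ∈ [0, ε)`.
-/

theorem abs_sub_mul_sign_le_abs_abs_sub (x η : ℝ) : |x - η * Real.sign x| ≤ |(|x| - η)| := by
  rcases lt_trichotomy x 0 with hx | rfl | hx
  · rw [Real.sign_of_neg hx, abs_of_neg hx, ← abs_neg]
    exact le_of_eq (by ring_nf)
  · simp
  · rw [Real.sign_of_pos hx, abs_of_pos hx, mul_one]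

section SubgradientStep

variable {η a : ℕ → ℝ}

theorem tendsto_atBot_of_succ_le_sub_of_tendsto_sum {T : ℕ}
    (hdiv : Tendsto (fun N => ∑ t ∈ Finset.range N, η t) atTop atTop)
    (hstep : ∀ t ≥ T, a (t + 1) ≤ a t - η t) :
    Tendsto a atTop atBot := by
  set S := fun N => ∑ t ∈ Finset.range N, η t
  have hanti : AntitoneOn (fun t => a t + S t) {t | T ≤ t} :=
    antitoneOn_nat_Ici_of_succ_le fun t ht => by
      simp only [S, Finset.sum_range_succ]
      linarith [hstep t ht]
  have hbound : ∀ᶠ t in atTop, a t ≤ (a T + S T) + -S t :=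
    eventually_atTop.2 ⟨T, fun t ht => by linarith [hanti (le_refl T) ht ht]⟩
  exact tendsto_atBot_mono' _ hbound <|
    tendsto_atBot_add_const_left _ _ (tendsto_neg_atTop_atBot.comp hdiv)

theorem exists_forall_ge_lt_of_succ_le_abs_sub (hη : ∀ t, 0 ≤ η t)
    (hto0 : Tendsto η atTop (nhds 0))
    (hdiv : Tendsto (fun N => ∑ t ∈ Finset.range N, η t) atTop atTop)
    (ha : ∀ t, 0 ≤ a t) (hstep : ∀ t, a (t + 1) ≤ |a t - η t|) {ε : ℝ} (hε : 0 < ε) :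
    ∃ N, ∀ t ≥ N, a t < ε := by
  obtain ⟨T, hT⟩ := eventually_atTop.1 (hto0.eventually_lt_const hε)
  have hentry : ∃ t₀ ≥ T, a t₀ < ε := by
    by_contra! hbig
    have hdecr : ∀ t ≥ T, a (t + 1) ≤ a t - η t := fun t ht => by
      rw [← abs_of_nonneg (by linarith [hT t ht, hbig t ht] : 0 ≤ a t - η t)]
      exact hstep t
    have hbot := tendsto_atBot_of_succ_le_sub_of_tendsto_sum hdiv hdecr
    obtain ⟨t, ht⟩ := (hbot.eventually_lt_atBot 0).exists
    exact (ha t).not_gt ht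
  obtain ⟨t₀, ht₀T, ht₀⟩ := hentry
  refine ⟨t₀, fun t ht => ?_⟩
  induction t, ht using Nat.le_induction with
  | base => exact ht₀
  | succ t ht ih =>
    exact (hstep t).trans_lt (abs_sub_lt_of_nonneg_of_lt (ha t) ih (hη t) (hT t (ht₀T.trans ht)))

theorem tendsto_zero_of_succ_le_abs_sub (hη : ∀ t, 0 ≤ η t)
    (hto0 : Tendsto η atTop (nhds 0))
    (hdiv : Tendsto (fun N => ∑ t ∈ Finset.range N, η t) atTop atTop)
    (ha : ∀ t, 0 ≤ a t) (hstep : ∀ t, a (t + 1) ≤ |a t - η t|) :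
    Tendsto a atTop (nhds 0) := by
  refine tendsto_order.2 ⟨fun b hb => Eventually.of_forall fun t => hb.trans_le (ha t),
    fun ε hε => ?_⟩
  obtain ⟨N, hN⟩ := exists_forall_ge_lt_of_succ_le_abs_sub hη hto0 hdiv ha hstep hε
  exact eventually_atTop.2 ⟨N, hN⟩

end SubgradientStep

theorem stmt0 (η : ℕ → ℝ) (hpos : ∀ t, 0 < η t)
    (hto0 : Tendsto η atTop (nhds 0))
    (hdiv : Tendsto (fun N => ∑ t ∈ Finset.range N, η t) atTop atTop)
    (d : ℕ → ℝ) (hrec : ∀ t, d (t + 1) = d t - η t * Real.sign (d t)) :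
    Tendsto d atTop (nhds 0) := by
  have hstep : ∀ t, |d (t + 1)| ≤ |(|d t| - η t)| := fun t => by
    rw [hrec]
    exact abs_sub_mul_sign_le_abs_abs_sub _ _
  refine (tendsto_zero_iff_abs_tendsto_zero d).2 ?_
  exact tendsto_zero_of_succ_le_abs_sub (fun t => (hpos t).le) hto0 hdiv
    (fun t => abs_nonneg (d t)) hstep
end

section
/- Let $x \in \mathbb{R}^n$, $x \ne 0$, and $y \in \mathbb{R}^m$. For any matrix $W \in \mathbb{R}^{m\times n}$ with $Wx = y$, the max-norm satisfies $\|W\|_{\max} \ge \|y\|_\infty / \|x\|_1$, and the matrix $W^* = y\,\mathrm{sign}(x)^\top/\|x\|_1$ achieves this bound, i.e., $\|W^*\|_{\max} = \|y\|_\infty/\|x\|_1 = \min_{W : Wx = y} \|W\|_{\max}$. -/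
open Filter Matrix

lemma maxNorm_nonneg {m n : ℕ} (W : Matrix (Fin m) (Fin n) ℝ) : 0 ≤ maxNorm W :=
  Real.iSup_nonneg fun _ => Real.iSup_nonneg fun _ => abs_nonneg _

lemma abs_le_maxNorm {m n : ℕ} (W : Matrix (Fin m) (Fin n) ℝ) (i : Fin m) (j : Fin n) :
    |W i j| ≤ maxNorm W := by
  have h1 : |W i j| ≤ ⨆ j, |W i j| :=
    le_ciSup (f := fun j => |W i j|) (Set.Finite.bddAbove (Set.finite_range _)) j
  exact h1.trans (le_ciSup (f := fun i => ⨆ j, |W i j|) (Set.Finite.bddAbove (Set.finite_range _)) i)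

lemma linf_nonneg {n : ℕ} (v : Fin n → ℝ) : 0 ≤ linf v :=
  Real.iSup_nonneg fun _ => abs_nonneg _

lemma abs_le_linf {n : ℕ} (v : Fin n → ℝ) (i : Fin n) : |v i| ≤ linf v :=
  le_ciSup (f := fun i => |v i|) (Set.Finite.bddAbove (Set.finite_range _)) i

lemma rsign_mul_self (t : ℝ) : Real.sign t * t = |t| := by
  rcases lt_trichotomy t 0 with h | h | h
  · rw [Real.sign_of_neg h, abs_of_neg h]; ring
  · simp [h]
  · rw [Real.sign_of_pos h, abs_of_pos h]; ring

theorem stmt3 {m n : ℕ} (x : Fin n → ℝ) (hx : x ≠ 0) (y : Fin m → ℝ) :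
    (∀ W : Matrix (Fin m) (Fin n) ℝ, W.mulVec x = y → linf y / l1 x ≤ maxNorm W) ∧
    maxNorm (Matrix.of fun i j => y i * Real.sign (x j) / l1 x) = linf y / l1 x ∧
    IsLeast {c | ∃ W : Matrix (Fin m) (Fin n) ℝ, W.mulVec x = y ∧ c = maxNorm W}
      (linf y / l1 x) := by
  obtain ⟨j0, hj0⟩ : ∃ j, x j ≠ 0 := by
    by_contra h; push_neg at h; exact hx (funext h)
  have hl1 : 0 < l1 x := by
    have : (0:ℝ) < |x j0| := abs_pos.mpr hj0
    calc (0:ℝ) < |x j0| := this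
      _ ≤ l1 x := Finset.single_le_sum (fun i _ => abs_nonneg (x i)) (Finset.mem_univ j0)
  have part1 : ∀ W : Matrix (Fin m) (Fin n) ℝ, W.mulVec x = y → linf y / l1 x ≤ maxNorm W := by
    intro W hW
    rw [div_le_iff₀ hl1]
    refine Real.iSup_le (fun i => ?_) (mul_nonneg (maxNorm_nonneg W) hl1.le)
    have : y i = ∑ j, W i j * x j := by rw [← hW]; rfl
    calc |y i| = |∑ j, W i j * x j| := by rw [this]
      _ ≤ ∑ j, |W i j * x j| := Finset.abs_sum_le_sum_abs _ _
      _ ≤ ∑ j, maxNorm W * |x j| := by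
          refine Finset.sum_le_sum fun j _ => ?_
          rw [abs_mul]
          exact mul_le_mul_of_nonneg_right (abs_le_maxNorm W i j) (abs_nonneg _)
      _ = maxNorm W * l1 x := by rw [← Finset.mul_sum]; rfl
  set Ws : Matrix (Fin m) (Fin n) ℝ := Matrix.of fun i j => y i * Real.sign (x j) / l1 x with hWs
  have hmul : Ws.mulVec x = y := by
    funext i
    simp only [mulVec, dotProduct, hWs, Matrix.of_apply]
    have : ∑ j, y i * Real.sign (x j) / l1 x * x j = y i / l1 x * ∑ j, |x j| := by
      rw [Finset.mul_sum]
      refine Finset.sum_congr rfl fun j _ => ?_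
      rw [← rsign_mul_self (x j)]; ring
    rw [this, show (∑ j, |x j|) = l1 x from rfl]
    field_simp
  have part2 : maxNorm Ws = linf y / l1 x := by
    apply le_antisymm
    · refine Real.iSup_le (fun i => Real.iSup_le (fun j => ?_)
        (div_nonneg (linf_nonneg y) hl1.le)) (div_nonneg (linf_nonneg y) hl1.le)
      have h1 : |Ws i j| = |y i| * |Real.sign (x j)| / l1 x := by
        rw [hWs]; simp [abs_div, abs_mul, abs_of_pos hl1]
      rw [h1]
      gcongr
      calc |y i| * |Real.sign (x j)| ≤ |y i| * 1 :=
            mul_le_mul_of_nonneg_left (by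
              rcases Real.sign_apply_eq (x j) with h | h | h <;> simp [h]) (abs_nonneg _)
        _ ≤ linf y := by rw [mul_one]; exact abs_le_linf y i
    · exact part1 Ws hmul
  exact ⟨part1, part2, ⟨⟨Ws, hmul, part2.symm⟩, fun c ⟨W, hW, hc⟩ => hc ▸ part1 W hW⟩⟩
end

section
/- Consider SignGD on the loss $L(W) = \frac{1}{2}\|Wx - y\|_2^2$ with $W_0 = 0$, step sizes $\eta_t > 0$ with $\eta_t \to 0$ and $\sum_t \eta_t = \infty$, and updates $W_{t+1} = W_t - \eta_t\,\mathrm{sign}(\nabla_W L(W_t))$ (entrywise sign). Then $W_t \to W^* = y\,\mathrm{sign}(x)^\top/\|x\|_1$. -/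
open Filter Matrix

/-! The iterates stay of rank one, `W_t = w_t sign(x)ᵀ`, and `W_t x = ‖x‖₁ w_t`, so each
coordinate of `w_t` runs the scalar sign descent `b ↦ b - η_t sign(b - c)` towards
`c = y_i / ‖x‖₁`. While `|b - c| ≥ 2η_t` a step shrinks `|b - c|` by exactly `η_t`, which can
happen only finitely often because `∑ η_t = ∞`; and once `|b - c| ≤ ε` with `η_t ≤ ε` for all
later `t`, the iterate never leaves that interval again. -/

theorem Real.sign_eq_coe_sign (r : ℝ) : Real.sign r = SignType.sign r := by
  rcases lt_trichotomy r 0 with h | rfl | h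
  · simp [Real.sign_of_neg h, h]
  · simp
  · simp [Real.sign_of_pos h, h]

theorem Real.sign_mul (a b : ℝ) : Real.sign (a * b) = Real.sign a * Real.sign b := by
  rw [Real.sign_eq_coe_sign, Real.sign_eq_coe_sign, Real.sign_eq_coe_sign, _root_.sign_mul,
    SignType.coe_mul]

theorem Real.sign_mul_self (r : ℝ) : Real.sign r * r = |r| := by
  rw [Real.sign_eq_coe_sign, _root_.sign_mul_self]

theorem abs_sub_mul_sign_le {b η : ℝ} (hη : 0 ≤ η) :
    |b - η * Real.sign b| ≤ max (|b| - η) η := by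
  rcases lt_trichotomy b 0 with h | rfl | h
  · rw [Real.sign_of_neg h, abs_of_neg h, abs_le]
    constructor <;> cases max_cases (-b - η) η <;> linarith
  · simp [hη]
  · rw [Real.sign_of_pos h, abs_of_pos h, abs_le]
    constructor <;> cases max_cases (b - η) η <;> linarith

section SignDescent

variable {η b : ℕ → ℝ}

theorem abs_le_of_sign_descent (hη : ∀ t, 0 ≤ η t)
    (hrec : ∀ t, b (t + 1) = b t - η t * Real.sign (b t)) {T : ℕ} {ε : ℝ}
    (hηε : ∀ t ≥ T, η t ≤ ε) (hT : |b T| ≤ ε) : ∀ t ≥ T, |b t| ≤ ε := by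
  intro t ht
  induction t, ht using Nat.le_induction with
  | base => exact hT
  | succ t ht ih =>
    rw [hrec]
    exact (abs_sub_mul_sign_le (hη t)).trans (max_le (by linarith [hη t]) (hηε t ht))

theorem exists_abs_le_of_sign_descent (hη : ∀ t, 0 ≤ η t)
    (hdiv : Tendsto (fun N => ∑ t ∈ Finset.range N, η t) atTop atTop)
    (hrec : ∀ t, b (t + 1) = b t - η t * Real.sign (b t)) (T : ℕ) {ε : ℝ}
    (hηε : ∀ t ≥ T, 2 * η t ≤ ε) : ∃ t ≥ T, |b t| ≤ ε := by
  by_contra! hfar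
  have hdecay : ∀ t ≥ T, |b t| + ∑ s ∈ Finset.range t, η s
      ≤ |b T| + ∑ s ∈ Finset.range T, η s := by
    intro t ht
    induction t, ht using Nat.le_induction with
    | base => rfl
    | succ t ht ih =>
      have hstep : |b (t + 1)| ≤ |b t| - η t := by
        rw [hrec]
        refine (abs_sub_mul_sign_le (hη t)).trans (max_le le_rfl ?_)
        linarith [hfar t ht, hηε t ht]
      rw [Finset.sum_range_succ]
      linarith
  obtain ⟨t, ht, hbig⟩ := ((eventually_ge_atTop T).and
    (hdiv.eventually_gt_atTop (|b T| + ∑ s ∈ Finset.range T, η s))).exists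
  linarith [hdecay t ht, abs_nonneg (b t)]

theorem tendsto_zero_of_sign_descent (hη : ∀ t, 0 ≤ η t) (hto0 : Tendsto η atTop (nhds 0))
    (hdiv : Tendsto (fun N => ∑ t ∈ Finset.range N, η t) atTop atTop)
    (hrec : ∀ t, b (t + 1) = b t - η t * Real.sign (b t)) :
    Tendsto b atTop (nhds 0) := by
  rw [Metric.tendsto_atTop]
  intro ε hε
  obtain ⟨T, hT⟩ := eventually_atTop.mp (hto0.eventually (ge_mem_nhds (by positivity : 0 < ε / 4)))
  obtain ⟨T', hT'T, hT'⟩ := exists_abs_le_of_sign_descent hη hdiv hrec T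
    (ε := ε / 2) fun t ht => by linarith [hT t ht]
  refine ⟨T', fun t ht => ?_⟩
  rw [Real.dist_eq, sub_zero]
  have := abs_le_of_sign_descent hη hrec (fun t ht => by linarith [hT t (hT'T.trans ht)]) hT' t ht
  linarith

theorem tendsto_of_sign_descent (hη : ∀ t, 0 ≤ η t) (hto0 : Tendsto η atTop (nhds 0))
    (hdiv : Tendsto (fun N => ∑ t ∈ Finset.range N, η t) atTop atTop) {c : ℝ}
    (hrec : ∀ t, b (t + 1) = b t - η t * Real.sign (b t - c)) :
    Tendsto b atTop (nhds c) := by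
  rw [← tendsto_sub_nhds_zero_iff]
  exact tendsto_zero_of_sign_descent hη hto0 hdiv fun t => by rw [hrec]; ring

end SignDescent

theorem l1_pos {n : ℕ} {x : Fin n → ℝ} (hx : x ≠ 0) : 0 < l1 x := by
  obtain ⟨j, hj⟩ := Function.ne_iff.mp hx
  exact Finset.sum_pos' (fun j _ => abs_nonneg _) ⟨j, Finset.mem_univ j, abs_pos.mpr hj⟩

theorem vecMulVec_sign_mulVec {m n : ℕ} (a : Fin m → ℝ) (x : Fin n → ℝ) :
    vecMulVec a (fun j => Real.sign (x j)) *ᵥ x = l1 x • a := by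
  rw [vecMulVec_mulVec, op_smul_eq_smul]
  congr 1
  exact Finset.sum_congr rfl fun j _ => Real.sign_mul_self (x j)

noncomputable def signGDFactor {m n : ℕ} (η : ℕ → ℝ) (x : Fin n → ℝ) (y : Fin m → ℝ) :
    ℕ → Fin m → ℝ
  | 0 => 0
  | t + 1 => fun i =>
      signGDFactor η x y t i - η t * Real.sign (l1 x * signGDFactor η x y t i - y i)

theorem signGD_eq_vecMulVec {m n : ℕ} {x : Fin n → ℝ} {y : Fin m → ℝ} {η : ℕ → ℝ}
    {W : ℕ → Matrix (Fin m) (Fin n) ℝ} (hW0 : W 0 = 0)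
    (hrec : ∀ t i j, W (t + 1) i j
      = W t i j - η t * Real.sign (((W t).mulVec x i - y i) * x j)) (t : ℕ) :
    W t = vecMulVec (signGDFactor η x y t) (fun j => Real.sign (x j)) := by
  induction t with
  | zero => ext i j; simp [hW0, signGDFactor]
  | succ t ih =>
    ext i j
    rw [hrec, ih, vecMulVec_sign_mulVec, Real.sign_mul]
    simp only [vecMulVec_apply, Pi.smul_apply, smul_eq_mul, signGDFactor]
    ring

theorem tendsto_signGDFactor {m n : ℕ} {x : Fin n → ℝ} (hx : x ≠ 0) (y : Fin m → ℝ) {η : ℕ → ℝ}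
    (hη : ∀ t, 0 ≤ η t) (hto0 : Tendsto η atTop (nhds 0))
    (hdiv : Tendsto (fun N => ∑ t ∈ Finset.range N, η t) atTop atTop) :
    Tendsto (signGDFactor η x y) atTop (nhds fun i => y i / l1 x) := by
  have hS := l1_pos hx
  refine tendsto_pi_nhds.mpr fun i => tendsto_of_sign_descent hη hto0 hdiv fun t => ?_
  have : l1 x * signGDFactor η x y t i - y i = l1 x * (signGDFactor η x y t i - y i / l1 x) := by
    field_simp
  dsimp only [signGDFactor]
  rw [this, Real.sign_mul, Real.sign_of_pos hS, one_mul]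

theorem stmt5 {m n : ℕ} (x : Fin n → ℝ) (hx : x ≠ 0) (y : Fin m → ℝ)
    (η : ℕ → ℝ) (hpos : ∀ t, 0 < η t)
    (hto0 : Tendsto η atTop (nhds 0))
    (hdiv : Tendsto (fun N => ∑ t ∈ Finset.range N, η t) atTop atTop)
    (W : ℕ → Matrix (Fin m) (Fin n) ℝ) (hW0 : W 0 = 0)
    (hrec : ∀ t i j, W (t + 1) i j
      = W t i j - η t * Real.sign (((W t).mulVec x i - y i) * x j)) :
    Tendsto W atTop (nhds (Matrix.of fun i j => y i * Real.sign (x j) / l1 x)) := by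
  have hlim : Matrix.of (fun i j => y i * Real.sign (x j) / l1 x)
      = vecMulVec (fun i => y i / l1 x) (fun j => Real.sign (x j)) := by
    ext i j
    simp only [of_apply, vecMulVec_apply]
    ring
  rw [funext (signGD_eq_vecMulVec hW0 hrec), hlim]
  exact ((continuous_id.matrix_vecMulVec continuous_const).tendsto _).comp
    (tendsto_signGDFactor hx y (fun t => (hpos t).le) hto0 hdiv)
end

section
/- Consider idealized Muon on $L(W)=\frac12\|Wx-y\|_2^2$ with $W_0=0$, nonzero $x \in \mathbb{R}^n$ and $y \in \mathbb{R}^m$, step sizes $\eta_t > 0$, $\eta_t \to 0$, $\sum_t \eta_t = \infty$, and updates $W_{t+1} = W_t - \eta_t\,\mathrm{ortho}(\nabla_W L(W_t))$ where $\mathrm{ortho}$ denotes the orthogonal polar factor (with $\mathrm{ortho}(0)=0$). Then $W_t \to W^* = yx^\top/\|x\|_2^2$. -/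
open Filter Matrix

noncomputable def orthoR1 {m n : ℕ} (r : Fin m → ℝ) (x : Fin n → ℝ) :
    Matrix (Fin m) (Fin n) ℝ :=
  if r = 0 ∨ x = 0 then 0 else (l2 r * l2 x)⁻¹ • vecMulVec r x

/-!
The iterates stay on the line `W* + β • y xᵀ`: the residual `W x - y` is then `(β ‖x‖²) • y`, whose
polar factor is `sign β • y xᵀ / (‖y‖ ‖x‖)`. Hence `β` follows the scalar sign descent
`β ↦ β - ε sign β` with `ε_t = η_t / (‖y‖ ‖x‖)`. Because `∑ ε_t = ∞`, `|β|` eventually drops below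
any `δ` once `ε_t < δ`, and from then on a step `|β| ↦ | |β| - ε |` keeps it below `δ`.
-/

open Finset Topology

section SignDescent

variable {ε b : ℕ → ℝ}

lemma exists_ge_lt_of_le_abs_sub
    (hdiv : Tendsto (fun N => ∑ t ∈ range N, ε t) atTop atTop) (hb : ∀ t, 0 ≤ b t)
    (hstep : ∀ t, b (t + 1) ≤ |b t - ε t|) {δ : ℝ} {T : ℕ} (hsmall : ∀ t ≥ T, ε t < δ) :
    ∃ t ≥ T, b t < δ := by
  by_contra! hlarge
  have hmono : ∀ t ≥ T, b t + ∑ i ∈ range t, ε i ≤ b T + ∑ i ∈ range T, ε i := by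
    intro t ht
    induction t, ht using Nat.le_induction with
    | base => rfl
    | succ t ht ih =>
      have hdesc : b (t + 1) ≤ b t - ε t := by
        simpa [abs_of_nonneg (by linarith [hsmall t ht, hlarge t ht] : 0 ≤ b t - ε t)]
          using hstep t
      rw [sum_range_succ]
      linarith
  obtain ⟨t, hbig, ht⟩ :=
    ((hdiv.eventually_gt_atTop (b T + ∑ i ∈ range T, ε i)).and (eventually_ge_atTop T)).exists
  linarith [hmono t ht, hb t]

lemma tendsto_zero_of_le_abs_sub (hε : ∀ t, 0 ≤ ε t) (hε0 : Tendsto ε atTop (𝓝 0))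
    (hdiv : Tendsto (fun N => ∑ t ∈ range N, ε t) atTop atTop) (hb : ∀ t, 0 ≤ b t)
    (hstep : ∀ t, b (t + 1) ≤ |b t - ε t|) :
    Tendsto b atTop (𝓝 0) := by
  refine tendsto_order.2 ⟨fun a ha => .of_forall fun t => ha.trans_le (hb t), fun δ hδ => ?_⟩
  obtain ⟨T, hT⟩ := eventually_atTop.1 ((tendsto_order.1 hε0).2 δ hδ)
  obtain ⟨t₀, ht₀T, ht₀⟩ := exists_ge_lt_of_le_abs_sub hdiv hb hstep hT
  refine eventually_atTop.2 ⟨t₀, fun t ht => ?_⟩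
  induction t, ht using Nat.le_induction with
  | base => exact ht₀
  | succ t ht ih =>
    refine (hstep t).trans_lt (abs_sub_lt_iff.2 ⟨?_, ?_⟩)
    · linarith [hε t]
    · linarith [hT t (ht₀T.trans ht), hb t]

lemma abs_sub_mul_sign_le_s8 (β e : ℝ) : |β - e * SignType.sign β| ≤ |(|β| - e)| := by
  rcases lt_trichotomy β 0 with hβ | rfl | hβ
  · rw [sign_neg hβ, abs_of_neg hβ, ← abs_neg]; simp [sub_eq_add_neg, add_comm]
  · simp
  · rw [sign_pos hβ, abs_of_pos hβ]; simp

noncomputable def signDescent (ε : ℕ → ℝ) (β₀ : ℝ) : ℕ → ℝ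
  | 0 => β₀
  | t + 1 => signDescent ε β₀ t - ε t * SignType.sign (signDescent ε β₀ t)

lemma tendsto_signDescent (hε : ∀ t, 0 ≤ ε t) (hε0 : Tendsto ε atTop (𝓝 0))
    (hdiv : Tendsto (fun N => ∑ t ∈ range N, ε t) atTop atTop) (β₀ : ℝ) :
    Tendsto (signDescent ε β₀) atTop (𝓝 0) :=
  (tendsto_zero_iff_abs_tendsto_zero _).2 <|
    tendsto_zero_of_le_abs_sub hε hε0 hdiv (fun _ => abs_nonneg _)
      fun _ => abs_sub_mul_sign_le_s8 _ _

end SignDescent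

section RankOne

variable {m n : ℕ}

lemma l2_sq (v : Fin n → ℝ) : l2 v ^ 2 = v ⬝ᵥ v := by
  rw [l2, Real.sq_sqrt (sum_nonneg fun i _ => sq_nonneg (v i))]
  simp [dotProduct, sq]

lemma l2_pos {v : Fin n → ℝ} (hv : v ≠ 0) : 0 < l2 v := by
  obtain ⟨i, hi⟩ := Function.ne_iff.1 hv
  exact Real.sqrt_pos.2 <| (sq_pos_of_ne_zero hi).trans_le <|
    single_le_sum (fun j _ => sq_nonneg (v j)) (mem_univ i)

lemma l2_smul (c : ℝ) (v : Fin n → ℝ) : l2 (c • v) = |c| * l2 v := by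
  simp only [l2, Pi.smul_apply, smul_eq_mul, mul_pow, ← mul_sum]
  rw [Real.sqrt_mul (sq_nonneg c), Real.sqrt_sq_eq_abs]

lemma orthoR1_eq_smul_vecMulVec (r : Fin m → ℝ) (x : Fin n → ℝ) :
    orthoR1 r x = (l2 r * l2 x)⁻¹ • vecMulVec r x := by
  unfold orthoR1
  split_ifs with h
  · rcases h with rfl | rfl <;> ext <;> simp [vecMulVec_apply]
  · rfl

lemma orthoR1_smul_left (c : ℝ) (r : Fin m → ℝ) (x : Fin n → ℝ) :
    orthoR1 (c • r) x = (SignType.sign c : ℝ) • orthoR1 r x := by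
  simp only [orthoR1_eq_smul_vecMulVec, l2_smul, smul_vecMulVec, smul_smul]
  congr 1
  rcases lt_trichotomy c 0 with hc | rfl | hc
  · rw [sign_neg hc, abs_of_neg hc, SignType.coe_neg_one]; field_simp [hc.ne]
  · simp
  · rw [sign_pos hc, abs_of_pos hc, SignType.coe_one]; field_simp

lemma muon_step_vecMulVec {x : Fin n → ℝ} (hx : x ≠ 0) (y : Fin m → ℝ) (η β : ℝ) :
    ((l2 x ^ 2)⁻¹ + β) • vecMulVec y x -
        η • orthoR1 ((((l2 x ^ 2)⁻¹ + β) • vecMulVec y x) *ᵥ x - y) x =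
      ((l2 x ^ 2)⁻¹ + (β - η * (l2 y * l2 x)⁻¹ * SignType.sign β)) • vecMulVec y x := by
  have hx2 : 0 < l2 x ^ 2 := pow_pos (l2_pos hx) 2
  have hres : (((l2 x ^ 2)⁻¹ + β) • vecMulVec y x) *ᵥ x - y = (β * l2 x ^ 2) • y := by
    rw [smul_mulVec, vecMulVec_mulVec, op_smul_eq_smul, ← l2_sq, smul_smul, add_mul,
      inv_mul_cancel₀ hx2.ne', add_smul, one_smul, add_sub_cancel_left]
  rw [hres, orthoR1_smul_left, sign_mul, sign_pos hx2, mul_one, orthoR1_eq_smul_vecMulVec]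
  module

lemma muon_iterate_eq {x : Fin n → ℝ} (hx : x ≠ 0) (y : Fin m → ℝ) (η : ℕ → ℝ)
    (W : ℕ → Matrix (Fin m) (Fin n) ℝ) (hW0 : W 0 = 0)
    (hrec : ∀ t, W (t + 1) = W t - η t • orthoR1 ((W t).mulVec x - y) x) (t : ℕ) :
    W t = ((l2 x ^ 2)⁻¹ +
      signDescent (fun t => η t * (l2 y * l2 x)⁻¹) (-(l2 x ^ 2)⁻¹) t) • vecMulVec y x := by
  induction t with
  | zero => simp [hW0, signDescent]
  | succ t ih => rw [hrec, ih, muon_step_vecMulVec hx]; rfl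

end RankOne

theorem stmt8 {m n : ℕ} (x : Fin n → ℝ) (hx : x ≠ 0) (y : Fin m → ℝ) (hy : y ≠ 0)
    (η : ℕ → ℝ) (hpos : ∀ t, 0 < η t)
    (hto0 : Tendsto η atTop (nhds 0))
    (hdiv : Tendsto (fun N => ∑ t ∈ Finset.range N, η t) atTop atTop)
    (W : ℕ → Matrix (Fin m) (Fin n) ℝ) (hW0 : W 0 = 0)
    (hrec : ∀ t, W (t + 1) = W t - η t • orthoR1 ((W t).mulVec x - y) x) :
    Tendsto W atTop (nhds (((l2 x) ^ 2)⁻¹ • vecMulVec y x)) := by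
  have hc : 0 < (l2 y * l2 x)⁻¹ := inv_pos.2 (mul_pos (l2_pos hy) (l2_pos hx))
  have hβ : Tendsto (signDescent (fun t => η t * (l2 y * l2 x)⁻¹) (-(l2 x ^ 2)⁻¹)) atTop (𝓝 0) :=
    tendsto_signDescent (fun t => (mul_pos (hpos t) hc).le) (by simpa using hto0.mul_const _)
      (by simpa only [← sum_mul] using hdiv.atTop_mul_const hc) _
  rw [funext (muon_iterate_eq hx y η W hW0 hrec)]
  simpa using (tendsto_const_nhds.add hβ).smul_const (vecMulVec y x)
end
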